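/- arXiv:2410.13593 — 2 statements merged into one kernel-verified Lean document; each statement's English description precedes it below -/
import Mathlib

section
/- Let n and k be natural numbers with k ≤ n and n - k even, and let f_1, ..., f_k be orthonormal vectors in n-dimensional Euclidean space. Then the function a ↦ 2^k · β_{n-k} · ∫_0^{⟨f_1,a⟩} ⋯ ∫_0^{⟨f_k,a⟩} (1 - t_1² - ⋯ - t_k²)^{(n-k)/2} dt_1 ⋯ dt_k is a polynomial function of a of total degree at most n. -/
/-!
Since `n - k = 2d`, the integrand `(1 - ∑ tᵢ²)^d` is a polynomial `q` of degree `2d`. Integrating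
a monomial `∏ tᵢ^αᵢ` over the box spanned by `0` and `x`, with the orientation signs, gives
`∏ xᵢ^(αᵢ+1)/(αᵢ+1)`, so the signed box integral of `q` is a polynomial in `x` of degree at most
`2d + k = n`. Substituting the linear forms `xᵢ = ⟪fᵢ, a⟫` does not raise the degree.
-/

open MeasureTheory Finset
open scoped RealInnerProductSpace

/-- The volume of the `m`-dimensional unit ball. -/
noncomputable def unitBallVol (m : ℕ) : ℝ :=
  Real.pi ^ ((m : ℝ) / 2) / Real.Gamma ((m : ℝ) / 2 + 1)

theorem setIntegral_univ_pi_prod {ι : Type*} [Fintype ι] {E : ι → Type*}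
    [∀ i, MeasureSpace (E i)] [∀ i, SigmaFinite (volume : Measure (E i))]
    (s : ∀ i, Set (E i)) (g : ∀ i, E i → ℝ) :
    ∫ x in Set.univ.pi s, ∏ i, g i (x i) = ∏ i, ∫ y in s i, g i y := by
  rw [volume_pi, Measure.restrict_pi_pi, integral_fintype_prod_eq_prod]

theorem sign_mul_setIntegral_uIoc_zero (g : ℝ → ℝ) (x : ℝ) :
    (if x < 0 then (-1 : ℝ) else 1) * ∫ s in Set.uIoc 0 x, g s = ∫ s in (0)..x, g s := by
  rw [intervalIntegral.intervalIntegral_eq_integral_uIoc, smul_eq_mul]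
  by_cases hx : x < 0
  · simp [hx, not_le.mpr hx]
  · simp [hx, not_lt.mp hx]

namespace MvPolynomial

theorem eval_bind₁ {σ τ R : Type*} [CommSemiring R] (x : τ → R) (g : σ → MvPolynomial τ R)
    (q : MvPolynomial σ R) : eval x (bind₁ g q) = eval (fun i => eval x (g i)) q :=
  eval₂Hom_bind₁ _ _ _ _

theorem totalDegree_bind₁_le {σ τ R : Type*} [CommSemiring R] (g : σ → MvPolynomial τ R)
    {m : ℕ} (hg : ∀ i, (g i).totalDegree ≤ m) (q : MvPolynomial σ R) :
    (bind₁ g q).totalDegree ≤ q.totalDegree * m := by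
  conv_lhs => rw [q.as_sum]
  rw [map_sum]
  refine (totalDegree_finsetSum _ _).trans (Finset.sup_le fun α hα => ?_)
  rw [bind₁_monomial]
  calc (C (q.coeff α) * ∏ i ∈ α.support, g i ^ α i).totalDegree
      ≤ ∑ i ∈ α.support, α i * m :=
        (totalDegree_mul _ _).trans <| by
          rw [totalDegree_C, zero_add]
          exact (totalDegree_finsetProd _ _).trans <| Finset.sum_le_sum fun i _ =>
            (totalDegree_pow _ _).trans (Nat.mul_le_mul_left _ (hg i))
    _ = (α.sum fun _ e => e) * m := by rw [Finsupp.sum, Finset.sum_mul]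
    _ ≤ q.totalDegree * m := Nat.mul_le_mul_right _ (le_totalDegree hα)

section Fintype

variable {ι : Type*} [Fintype ι]

theorem totalDegree_one_sub_sum_sq_pow_le (d : ℕ) :
    ((1 - ∑ i, X i ^ 2 : MvPolynomial ι ℝ) ^ d).totalDegree ≤ 2 * d := by
  refine (totalDegree_pow _ _).trans ?_
  rw [mul_comm]
  refine Nat.mul_le_mul_right d ?_
  refine (totalDegree_sub _ _).trans (max_le (by simp) ?_)
  refine (totalDegree_finsetSum _ _).trans (Finset.sup_le fun i _ => ?_)
  exact (totalDegree_pow _ _).trans (by simp [totalDegree_X])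

noncomputable def innerPoly (v : EuclideanSpace ℝ ι) : MvPolynomial ι ℝ :=
  ∑ j, C (v j) * X j

theorem totalDegree_innerPoly_le (v : EuclideanSpace ℝ ι) : (innerPoly v).totalDegree ≤ 1 :=
  (totalDegree_finsetSum _ _).trans <| Finset.sup_le fun _ _ =>
    (totalDegree_mul _ _).trans (by simp [totalDegree_X])

theorem eval_innerPoly (v a : EuclideanSpace ℝ ι) :
    eval (fun j => a j) (innerPoly v) = ⟪v, a⟫ := by
  simp [innerPoly, PiLp.inner_apply, mul_comm]

/-- The primitive of `q` in every variable that vanishes on the coordinate hyperplanes. -/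
noncomputable def boxPrimitive (q : MvPolynomial ι ℝ) : MvPolynomial ι ℝ :=
  ∑ α ∈ q.support, C (q.coeff α) * ∏ i, (C ((α i + 1 : ℝ)⁻¹) * X i ^ (α i + 1))

theorem totalDegree_boxPrimitive_le (q : MvPolynomial ι ℝ) :
    q.boxPrimitive.totalDegree ≤ q.totalDegree + Fintype.card ι := by
  refine (totalDegree_finsetSum _ _).trans (Finset.sup_le fun α hα => ?_)
  refine (totalDegree_mul _ _).trans ?_
  rw [totalDegree_C, zero_add]
  refine (totalDegree_finsetProd _ _).trans ?_
  calc ∑ i, (C ((α i + 1 : ℝ)⁻¹) * X i ^ (α i + 1)).totalDegree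
      ≤ ∑ i, (α i + 1) := Finset.sum_le_sum (f := fun i => _) fun i _ =>
        (totalDegree_mul _ _).trans <| by simp [totalDegree_C, totalDegree_X_pow]
    _ = (α.sum fun _ e => e) + Fintype.card ι := by
        rw [Finset.sum_add_distrib, Finsupp.sum_fintype _ _ (fun _ => rfl)]; simp
    _ ≤ q.totalDegree + Fintype.card ι := Nat.add_le_add_right (le_totalDegree hα) _

theorem eval_boxPrimitive (q : MvPolynomial ι ℝ) (x : ι → ℝ) :
    eval x q.boxPrimitive = ∑ α ∈ q.support, q.coeff α * ∏ i, ∫ s in (0)..x i, s ^ α i := by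
  simp only [boxPrimitive, map_sum, map_mul, map_prod, map_pow, eval_C, eval_X, integral_pow]
  refine Finset.sum_congr rfl fun α _ => ?_
  congr 1
  refine Finset.prod_congr rfl fun i _ => ?_
  rw [zero_pow (Nat.succ_ne_zero _), sub_zero, div_eq_inv_mul]

theorem sign_mul_setIntegral_eval_eq_eval_boxPrimitive (q : MvPolynomial ι ℝ) (x : ι → ℝ) :
    (∏ i, if x i < 0 then (-1 : ℝ) else 1) *
        ∫ t in Set.univ.pi fun i => Set.uIoc 0 (x i), eval t q = eval x q.boxPrimitive := by
  have hmonomial : ∀ α : ι →₀ ℕ, IntegrableOn (fun t : ι → ℝ => ∏ i, t i ^ α i)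
      (Set.univ.pi fun i => Set.uIoc 0 (x i)) := fun α => by
    rw [IntegrableOn, volume_pi, Measure.restrict_pi_pi]
    exact Integrable.fintype_prod fun i =>
      intervalIntegrable_iff.mp (intervalIntegral.intervalIntegrable_pow (α i))
  rw [eval_boxPrimitive]
  simp_rw [eval_eq']
  rw [integral_finsetSum _ fun α _ => (hmonomial α).const_mul _, Finset.mul_sum]
  refine Finset.sum_congr rfl fun α _ => ?_
  rw [integral_const_mul, setIntegral_univ_pi_prod (E := fun _ => ℝ) _ fun i s => s ^ α i,
    mul_left_comm, ← Finset.prod_mul_distrib]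
  simp_rw [sign_mul_setIntegral_uIoc_zero]

end Fintype

end MvPolynomial

open MvPolynomial in
theorem pizza_A1k_polynomial_general (n k : ℕ) (hkn : k ≤ n) (hpar : Even (n - k))
    (f : Fin k → EuclideanSpace ℝ (Fin n)) :
    ∃ p : MvPolynomial (Fin n) ℝ, p.totalDegree ≤ n ∧
      ∀ a : EuclideanSpace ℝ (Fin n),
        2 ^ k * unitBallVol (n - k) *
          ((∏ i : Fin k, if ⟪f i, a⟫ < 0 then (-1 : ℝ) else 1) *
            ∫ t in Set.univ.pi fun i : Fin k => Set.uIoc 0 ⟪f i, a⟫,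
              (1 - ∑ i, t i ^ 2) ^ (((n : ℝ) - (k : ℝ)) / 2)) =
        MvPolynomial.eval (fun i => a i) p := by
  obtain ⟨d, hd⟩ := hpar
  set q : MvPolynomial (Fin k) ℝ := (1 - ∑ i, X i ^ 2) ^ d
  have hintegrand (t : Fin k → ℝ) :
      (1 - ∑ i, t i ^ 2) ^ (((n : ℝ) - (k : ℝ)) / 2) = eval t q := by
    have hexponent : ((n : ℝ) - k) / 2 = d := by
      rw [← Nat.cast_sub hkn, hd]; push_cast; ring
    simp [q, hexponent]
  refine ⟨C (2 ^ k * unitBallVol (n - k)) * bind₁ (fun i => innerPoly (f i)) q.boxPrimitive,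
    ?_, fun a => ?_⟩
  · calc _ ≤ q.boxPrimitive.totalDegree * 1 := (totalDegree_mul _ _).trans <| by
          rw [totalDegree_C, zero_add]
          exact totalDegree_bind₁_le _ (fun i => totalDegree_innerPoly_le _) _
      _ ≤ 2 * d + k := by
          simpa using (totalDegree_boxPrimitive_le q).trans
            (Nat.add_le_add_right (totalDegree_one_sub_sum_sq_pow_le d) _)
      _ = n := by omega
  · simp_rw [hintegrand, sign_mul_setIntegral_eval_eq_eval_boxPrimitive]
    rw [map_mul, eval_C, eval_bind₁]
    simp only [eval_innerPoly]

/-- for `k ≤ n` with `n - k` even and `f_1, …, f_k` orthonormal in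
`n`-dimensional Euclidean space, the function
`a ↦ 2^k · β_{n-k} · ∫_0^{⟨f_1,a⟩} ⋯ ∫_0^{⟨f_k,a⟩} (1 - t_1² - ⋯ - t_k²)^{(n-k)/2} dt`
is a polynomial function of `a` of total degree at most `n`. -/
theorem pizza_A1k_polynomial (n k : ℕ) (hkn : k ≤ n) (hpar : Even (n - k))
    (f : Fin k → EuclideanSpace ℝ (Fin n)) (hf : Orthonormal ℝ f) :
    ∃ p : MvPolynomial (Fin n) ℝ, p.totalDegree ≤ n ∧
      ∀ a : EuclideanSpace ℝ (Fin n),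
        2 ^ k * unitBallVol (n - k) *
          ((∏ i : Fin k, if ⟪f i, a⟫ < 0 then (-1 : ℝ) else 1) *
            ∫ t in Set.univ.pi fun i : Fin k => Set.uIoc 0 ⟪f i, a⟫,
              (1 - ∑ i, t i ^ 2) ^ (((n : ℝ) - (k : ℝ)) / 2)) =
        MvPolynomial.eval (fun i => a i) p :=
  pizza_A1k_polynomial_general n k hkn hpar f
end

section
/- Let W be a finite reflection group acting on a finite-dimensional real inner product space V with root system Φ and Jacobian J(a) = Π_{α∈Φ⁺} ⟨α,a⟩. If Z is a polynomial function on V that is skew-symmetric with respect to W, i.e. Z(w(a)) = (-1)^w Z(a) for all w ∈ W where (-1)^w is the sign (determinant) of w, then J divides Z in the polynomial ring. -/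
/-!
A skew-symmetric `Z` changes sign under the reflection `s_α` in a root `α`, while `s_α` fixes
the hyperplane `α⊥` pointwise, so `Z` vanishes on `α⊥`. Eliminating one variable with the equation
of this hyperplane shows that the linear form `⟨α, ·⟩` then divides `Z`. Linear forms are prime, and
those of two positive roots are not associated, since unit vectors with proportional linear forms
agree up to sign and `Φ⁺` contains only one of `±α`. Hence their product `J` divides `Z`.
-/

open Finset
open scoped RealInnerProductSpace

theorem sum_mul_update {σ R : Type*} [CommRing R] [Fintype σ] [DecidableEq σ] (c x : σ → R)
    (i : σ) (v : R) :
    ∑ j, c j * Function.update x i v j = ∑ j, c j * x j + c i * (v - x i) := by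
  rw [← add_sum_erase _ _ (mem_univ i), ← add_sum_erase _ _ (mem_univ i), Function.update_self,
    sum_congr rfl fun j hj => by rw [Function.update_of_ne (ne_of_mem_erase hj)]]
  ring

namespace MvPolynomial

variable {σ R K : Type*}

theorem eval_aeval {τ : Type*} [CommRing R] (f : σ → MvPolynomial τ R) (x : τ → R)
    (Z : MvPolynomial σ R) :
    eval x (aeval f Z) = eval (fun j => eval x (f j)) Z := by
  rw [aeval_eq_bind₁]
  exact eval₂Hom_bind₁ _ _ _ _

theorem X_sub_dvd_sub_aeval_update [CommRing R] [DecidableEq σ] (i : σ)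
    (p Q : MvPolynomial σ R) :
    X i - p ∣ Q - aeval (Function.update X i p) Q := by
  induction Q using MvPolynomial.induction_on with
  | C a => simp
  | add Q₁ Q₂ h₁ h₂ =>
    rw [map_add, add_sub_add_comm]
    exact dvd_add h₁ h₂
  | mul_X Q j hQ =>
    set f := Function.update X i p
    have hXj : X i - p ∣ X j - f j := by
      rcases eq_or_ne j i with rfl | hj
      · simp [f]
      · simp [f, Function.update_of_ne hj]
    rw [map_mul, aeval_X,
      show Q * X j - aeval f Q * f j = (Q - aeval f Q) * X j + aeval f Q * (X j - f j) by ring]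
    exact dvd_add (hQ.mul_right _) (hXj.mul_left _)

section LinearForm

variable [Field K] [Fintype σ]

noncomputable def linearForm (c : σ → K) : MvPolynomial σ K :=
  ∑ i, C (c i) * X i

@[simp]
theorem eval_linearForm (c x : σ → K) : eval x (linearForm c) = ∑ i, c i * x i := by
  simp [linearForm]

theorem linearForm_eq_sumSMulX (c : σ → K) :
    linearForm c = sumSMulX (Finsupp.equivFunOnFinite.symm c) := by
  simp [linearForm, sumSMulX, Finsupp.linearCombination_apply, Finsupp.sum_fintype, smul_eq_C_mul]

theorem prime_linearForm {c : σ → K} (hc : c ≠ 0) : Prime (linearForm c) := by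
  obtain ⟨i, hi⟩ := Function.ne_iff.mp hc
  rw [linearForm_eq_sumSMulX]
  refine (irreducible_sumSMulX _ ⟨i, by simpa using hi⟩ fun r hr => ?_).prime
  exact isUnit_iff_ne_zero.mpr (ne_zero_of_dvd_ne_zero hi (by simpa using hr i))

theorem linearForm_dvd_of_eval_eq_zero [Infinite K] {c : σ → K} (hc : c ≠ 0)
    {Z : MvPolynomial σ K} (hZ : ∀ x, ∑ i, c i * x i = 0 → eval x Z = 0) :
    linearForm c ∣ Z := by
  classical
  obtain ⟨i, hi : c i ≠ 0⟩ := Function.ne_iff.mp hc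
  -- substituting `X i - linearForm c / c i` for `X i` projects onto the hyperplane `∑ c j x j = 0`
  set p := X i - C (c i)⁻¹ * linearForm c
  have hproj : aeval (Function.update X i p) Z = 0 := by
    refine MvPolynomial.funext fun x => ?_
    rw [eval_aeval, map_zero]
    refine hZ _ ?_
    simp only [Function.apply_update (fun _ => eval x), eval_X, sum_mul_update]
    simp [p, mul_inv_cancel_left₀ hi]
  have hdvd := X_sub_dvd_sub_aeval_update i p Z
  rw [hproj, sub_zero, sub_sub_cancel] at hdvd
  exact (dvd_mul_left _ _).trans hdvd

end LinearForm

end MvPolynomial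

theorem Finset.prod_dvd_of_prime_of_pairwise_not_dvd {ι M : Type*} [CommMonoidWithZero M]
    {s : Finset ι} {f : ι → M} {z : M} (hprime : ∀ i ∈ s, Prime (f i))
    (hndvd : (s : Set ι).Pairwise fun i j => ¬ f i ∣ f j) (hdvd : ∀ i ∈ s, f i ∣ z) :
    ∏ i ∈ s, f i ∣ z := by
  classical
  induction s using Finset.induction_on generalizing z with
  | empty => simp
  | insert a t ha ih =>
    simp only [mem_insert, forall_eq_or_imp, coe_insert, Set.pairwise_insert] at hprime hndvd hdvd
    obtain ⟨y, rfl⟩ := hdvd.1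
    rw [prod_insert ha]
    refine mul_dvd_mul_left _ (ih hprime.2 hndvd.1 fun i hi => ?_)
    exact ((hprime.2 i hi).dvd_or_dvd (hdvd.2 i hi)).resolve_left
      (hndvd.2 i hi (ne_of_mem_of_not_mem hi ha).symm).2

section Reflection

variable {E : Type*} [NormedAddCommGroup E] [InnerProductSpace ℝ E]

theorem Submodule.reflection_orthogonal_singleton_apply {α : E} (hα : ‖α‖ = 1) (x : E) :
    (ℝ ∙ α)ᗮ.reflection x = x - (2 * ⟪α, x⟫) • α := by
  rw [reflection_orthogonal_apply, reflection_apply, starProjection_unit_singleton ℝ hα]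
  module

theorem Submodule.det_reflection_orthogonal_singleton [FiniteDimensional ℝ E] {α : E}
    (hα : α ≠ 0) : LinearMap.det (ℝ ∙ α)ᗮ.reflection.toLinearMap = -1 := by
  rw [det_reflection, orthogonal_orthogonal, finrank_span_singleton hα, pow_one]

theorem eq_or_eq_neg_of_mem_span_singleton_of_norm_eq {α β : E} (h : α ∈ ℝ ∙ β)
    (hnorm : ‖α‖ = ‖β‖) (hβ : β ≠ 0) : α = β ∨ α = -β := by
  obtain ⟨c, rfl⟩ := Submodule.mem_span_singleton.mp h
  rw [norm_smul, Real.norm_eq_abs] at hnorm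
  have : |c| = 1 := by simpa [hβ] using hnorm
  rcases abs_eq zero_le_one |>.mp this with rfl | rfl <;> simp

theorem apply_eq_zero_of_apply_reflection_eq_det_mul [FiniteDimensional ℝ E] {α : E}
    (hα : α ≠ 0) {F : E → ℝ}
    (hF : ∀ a, F ((ℝ ∙ α)ᗮ.reflection a) = LinearMap.det (ℝ ∙ α)ᗮ.reflection.toLinearMap * F a)
    {a : E} (ha : ⟪α, a⟫ = 0) : F a = 0 := by
  have hfix : (ℝ ∙ α)ᗮ.reflection a = a := Submodule.reflection_mem_subspace_eq_self
    (Submodule.mem_orthogonal_singleton_iff_inner_right.mpr ha)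
  have hsign := hF a
  rw [hfix, Submodule.det_reflection_orthogonal_singleton hα] at hsign
  linarith

end Reflection

namespace EuclideanSpace

open MvPolynomial

variable {ι : Type*} [Fintype ι]

theorem inner_eq_sum_mul (α a : EuclideanSpace ℝ ι) : ⟪α, a⟫ = ∑ i, α i * a i := by
  simp [inner_eq_star_dotProduct, dotProduct, mul_comm]

theorem eval_linearForm (α a : EuclideanSpace ℝ ι) : eval a (linearForm α) = ⟪α, a⟫ := by
  rw [MvPolynomial.eval_linearForm, inner_eq_sum_mul]

theorem linearForm_dvd_of_inner_eq_zero {α : EuclideanSpace ℝ ι} (hα : α ≠ 0)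
    {Z : MvPolynomial ι ℝ} (hZ : ∀ a : EuclideanSpace ℝ ι, ⟪α, a⟫ = 0 → eval a Z = 0) :
    linearForm α ∣ Z :=
  linearForm_dvd_of_eval_eq_zero (by simpa using hα) fun x hx =>
    hZ (WithLp.toLp 2 x) (by rwa [inner_eq_sum_mul])

theorem mem_span_singleton_of_linearForm_dvd {α β : EuclideanSpace ℝ ι}
    (h : linearForm β ∣ linearForm α) : α ∈ ℝ ∙ β := by
  obtain ⟨Q, hQ⟩ := h
  rw [← (ℝ ∙ β).orthogonal_orthogonal, Submodule.mem_orthogonal]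
  intro u hu
  rw [Submodule.mem_orthogonal_singleton_iff_inner_right] at hu
  rw [real_inner_comm, ← eval_linearForm, hQ, map_mul, eval_linearForm, hu, zero_mul]

end EuclideanSpace

open MvPolynomial EuclideanSpace in
theorem jacobian_dvd_skew_symmetric_general (n : ℕ)
    (Φ : Finset (EuclideanSpace ℝ (Fin n)))
    (hunit : ∀ α ∈ Φ, ‖α‖ = 1)
    (Φp : Finset (EuclideanSpace ℝ (Fin n))) (hsub : Φp ⊆ Φ)
    (hpos : ∀ α ∈ Φ, (α ∈ Φp ↔ ¬(-α ∈ Φp)))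
    (Z : MvPolynomial (Fin n) ℝ)
    (hskew : ∀ w ∈ Subgroup.closure
      {w : EuclideanSpace ℝ (Fin n) ≃ₗᵢ[ℝ] EuclideanSpace ℝ (Fin n) |
        ∃ α ∈ Φ, ∀ x, w x = x - (2 * ⟪α, x⟫) • α},
      ∀ a : EuclideanSpace ℝ (Fin n),
        MvPolynomial.eval (fun i => w a i) Z =
          LinearMap.det w.toLinearEquiv.toLinearMap *
            MvPolynomial.eval (fun i => a i) Z) :
    (∏ α ∈ Φp, ∑ i, MvPolynomial.C (α i) * MvPolynomial.X i) ∣ Z := by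
  have hunit' : ∀ α ∈ Φp, ‖α‖ = 1 := fun α hα => hunit α (hsub hα)
  have hne : ∀ α ∈ Φp, α ≠ 0 := fun α hα => norm_ne_zero_iff.mp (by simp [hunit' α hα])
  change ∏ α ∈ Φp, linearForm α ∣ Z
  refine prod_dvd_of_prime_of_pairwise_not_dvd
    (fun α hα => prime_linearForm (by simpa using hne α hα)) ?_ fun α hα => ?_
  · intro α hα β hβ hαβ hdvd
    have hspan : β ∈ ℝ ∙ α := mem_span_singleton_of_linearForm_dvd hdvd
    rcases eq_or_eq_neg_of_mem_span_singleton_of_norm_eq hspan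
      (by rw [hunit' α hα, hunit' β hβ]) (hne α hα) with rfl | rfl
    · exact hαβ rfl
    · exact (hpos α (hsub hα)).mp hα hβ
  · refine linearForm_dvd_of_inner_eq_zero (hne α hα) fun a ha =>
      apply_eq_zero_of_apply_reflection_eq_det_mul (F := fun a => eval a.ofLp Z) (hne α hα)
        (fun a => hskew _ ?_ a) ha
    exact Subgroup.subset_closure
      ⟨α, hsub hα, Submodule.reflection_orthogonal_singleton_apply (hunit' α hα)⟩

/-- let `W` be a finite reflection group on `ℝ^n`, generated by the
reflections in the pseudo-roots of a pseudo-root system `Φ`, with a choice of positive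
roots `Φ⁺` (containing exactly one of `±α` for each `α ∈ Φ`).  If `Z` is a polynomial
that is skew-symmetric with respect to `W`, i.e. `Z(w(a)) = (-1)^w Z(a)` with `(-1)^w`
the determinant of `w`, then the Jacobian `J = ∏_{α∈Φ⁺} ⟨α,·⟩` divides `Z`. -/
theorem jacobian_dvd_skew_symmetric (n : ℕ)
    (Φ : Finset (EuclideanSpace ℝ (Fin n)))
    (hunit : ∀ α ∈ Φ, ‖α‖ = 1)
    (hrefl : ∀ α ∈ Φ, ∀ β ∈ Φ, α - (2 * ⟪β, α⟫) • β ∈ Φ)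
    (Φp : Finset (EuclideanSpace ℝ (Fin n))) (hsub : Φp ⊆ Φ)
    (hpos : ∀ α ∈ Φ, (α ∈ Φp ↔ ¬(-α ∈ Φp)))
    (hfin : (Subgroup.closure
      {w : EuclideanSpace ℝ (Fin n) ≃ₗᵢ[ℝ] EuclideanSpace ℝ (Fin n) |
        ∃ α ∈ Φ, ∀ x, w x = x - (2 * ⟪α, x⟫) • α} :
          Subgroup _) |>.carrier.Finite)
    (Z : MvPolynomial (Fin n) ℝ)
    (hskew : ∀ w ∈ Subgroup.closure
      {w : EuclideanSpace ℝ (Fin n) ≃ₗᵢ[ℝ] EuclideanSpace ℝ (Fin n) |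
        ∃ α ∈ Φ, ∀ x, w x = x - (2 * ⟪α, x⟫) • α},
      ∀ a : EuclideanSpace ℝ (Fin n),
        MvPolynomial.eval (fun i => w a i) Z =
          LinearMap.det w.toLinearEquiv.toLinearMap *
            MvPolynomial.eval (fun i => a i) Z) :
    (∏ α ∈ Φp, ∑ i, MvPolynomial.C (α i) * MvPolynomial.X i) ∣ Z :=
  jacobian_dvd_skew_symmetric_general n Φ hunit Φp hsub hpos Z hskew
end
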